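/- arXiv:2404.04957 — 3 statements merged into one kernel-verified Lean document; each statement's English description precedes it below -/
import Mathlib

section
/- Consider the two-agent problem on state/action space $\{0,1\}$ with dynamics $x^i_{t+1} = u^i_t$ for $i=1,2$, horizon $T=2$, initial states $x^1_0 = x^2_0 = 1$, empirical measure $\mu_t(z) = \frac{1}{2}\sum_{i=1}^2 \mathbf{1}_{\{x^i_t = z\}}$, and cost $\mathbb{E}\big[\sum_{t=0}^{1} \sum_{z \in \{0,1\}} |\mu_t(z) - \tfrac{1}{2}|^2\big]$. Then: (a) the asymmetric deterministic policy where agent 1 plays $u^1_0 = 1$ and agent 2 plays $u^2_0 = 0$ achieves cost $1/2$; (b) every symmetric policy in which both agents independently randomize with the same distribution $\pi \in \mathcal{P}(\{0,1\})$ at time $0$ incurs cost at least $3/4$, with the minimum $3/4$ attained by the uniform randomization $\pi(0)=\pi(1)=1/2$. In particular, no symmetric independently randomized policy is optimal. -/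
open Finset

/-- Empirical measure at time 1 (on states `{0,1}` encoded as `Bool`) after
two agents play actions `u1, u2` at time 0, evaluated at the point `z`. -/
noncomputable def mu1 (u1 u2 : Bool) (z : Bool) : ℝ :=
  (1 / 2) * ((if u1 = z then 1 else 0) + (if u2 = z then 1 else 0))

/-- Stage cost at time 1: distance of the empirical measure to the uniform measure. -/
noncomputable def stage1Cost (u1 u2 : Bool) : ℝ :=
  ∑ z : Bool, |mu1 u1 u2 z - 1 / 2| ^ 2

/-- Total two-stage cost when starting from `x¹₀ = x²₀ = 1` (the stage-0 cost is
`|1 - 1/2|² + |0 - 1/2|² = 1/2` since `μ₀ = δ₁`) and the agents play `u1, u2`. -/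
noncomputable def totalCost (u1 u2 : Bool) : ℝ := 1 / 2 + stage1Cost u1 u2

/-- Probability of the action `b` under an independent randomization playing
`1` (i.e. `true`) with probability `p`. -/
noncomputable def pr (p : ℝ) (b : Bool) : ℝ := if b then p else 1 - p

/-- Expected total cost under the symmetric independently randomized policy `p`. -/
noncomputable def symCost (p : ℝ) : ℝ :=
  ∑ u1 : Bool, ∑ u2 : Bool, pr p u1 * pr p u2 * totalCost u1 u2

/-- The two-agent counterexample: the asymmetric deterministic policy `(1,0)` achieves
cost `1/2`; every symmetric independently randomized policy costs at least `3/4`, with the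
minimum `3/4` attained at the uniform randomization `p = 1/2`; in particular no symmetric
independently randomized policy is optimal. -/
theorem symmetric_policies_suboptimal :
    totalCost true false = 1 / 2 ∧
    (∀ p : ℝ, 0 ≤ p → p ≤ 1 → 3 / 4 ≤ symCost p) ∧
    symCost (1 / 2) = 3 / 4 ∧
    (∀ p : ℝ, 0 ≤ p → p ≤ 1 → 1 / 2 < symCost p) := by
  have key : ∀ p : ℝ, symCost p = 1/2 + (p^2 + (1-p)^2) * (1/2) := by
    intro p
    simp [symCost, pr, totalCost, stage1Cost, mu1, Fintype.sum_bool]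
    ring
  refine ⟨?_, ?_, ?_, ?_⟩
  · simp [totalCost, stage1Cost, mu1, Fintype.sum_bool]
  · intro p _ _; rw [key]; nlinarith [sq_nonneg (p - 1/2)]
  · rw [key]; norm_num
  · intro p _ _; rw [key]; nlinarith [sq_nonneg (p - 1/2), sq_nonneg p]
end

section
/- Let $(X_1,\dots,X_N)$ be an $N$-exchangeable sequence of random variables with values in a measurable space $\mathbb{X}$, let $(I_1, I_2, \dots)$ be i.i.d. uniform on $\{1,\dots,N\}$ and independent of $(X_1,\dots,X_N)$, and let $(Z_1, Z_2, \dots)$ be an infinitely exchangeable sequence with $\mathcal{L}(Z_1,\dots,Z_k) = \mathcal{L}(X_{I_1},\dots,X_{I_k})$ for all $k$. Then for all $1 \le m \le N$: $\| \mathcal{L}(X_1,\dots,X_m) - \mathcal{L}(Z_1,\dots,Z_m)\|_{TV} \leq \frac{m(m-1)}{2N}$. -/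
open MeasureTheory ProbabilityTheory
open scoped ENNReal

lemma exists_perm_extend {m N : ℕ} (hm : m ≤ N) (f : Fin m → Fin N)
    (hf : Function.Injective f) :
    ∃ σ : Equiv.Perm (Fin N), ∀ k, σ (Fin.castLE hm k) = f k := by
  classical
  have hc : Function.Injective (Fin.castLE hm) := Fin.castLE_injective hm
  have hcard : Fintype.card ((Set.range (Fin.castLE hm))ᶜ : Set (Fin N))
      = Fintype.card ((Set.range f)ᶜ : Set (Fin N)) := by
    rw [Fintype.card_compl_set, Fintype.card_compl_set]
    congr 1
    rw [Set.card_range_of_injective hc, Set.card_range_of_injective hf]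
  refine ⟨(Equiv.Set.sumCompl (Set.range (Fin.castLE hm))).symm.trans
    ((Equiv.sumCongr ((Equiv.ofInjective _ hc).symm.trans (Equiv.ofInjective f hf))
      (Fintype.equivOfCardEq hcard)).trans (Equiv.Set.sumCompl (Set.range f))), fun k => ?_⟩
  have hmem : Fin.castLE hm k ∈ Set.range (Fin.castLE hm) := ⟨k, rfl⟩
  simp only [Equiv.trans_apply]
  rw [Equiv.Set.sumCompl_symm_apply_of_mem hmem]
  have h1 : (Equiv.ofInjective _ hc).symm ⟨Fin.castLE hm k, hmem⟩ = k := by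
    rw [Equiv.symm_apply_eq]
    exact Subtype.ext (by simp [Equiv.ofInjective_apply])
  simp [h1, Equiv.ofInjective_apply]

/-- Diaconis–Freedman finite de Finetti bound: if `(X₁,…,X_N)` is `N`-exchangeable,
`(I₁, I₂, …)` are i.i.d. uniform on `{1,…,N}` independent of `X`, and `(Z₁, Z₂, …)` is an
infinitely exchangeable sequence whose finite-dimensional laws agree with those of
`(X_{I₁},…,X_{I_k})`, then the laws of `(X₁,…,X_m)` and `(Z₁,…,Z_m)` differ in total
variation by at most `m(m-1)/(2N)` (expressed via the sup over measurable sets of the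
difference in probabilities). -/
theorem diaconis_freedman {𝕏 : Type*} [MeasurableSpace 𝕏]
    {Ω : Type*} [MeasurableSpace Ω] (μ : Measure Ω) [IsProbabilityMeasure μ]
    {Ω' : Type*} [MeasurableSpace Ω'] (ν : Measure Ω') [IsProbabilityMeasure ν]
    (N : ℕ) (hN : 0 < N)
    (X : Fin N → Ω → 𝕏) (hXm : ∀ i, Measurable (X i))
    (I : ℕ → Ω → Fin N) (hIm : ∀ j, Measurable (I j))
    (Z : ℕ → Ω' → 𝕏) (hZm : ∀ j, Measurable (Z j))
    -- `(X₁,…,X_N)` is `N`-exchangeable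
    (hXexch : ∀ σ : Equiv.Perm (Fin N),
      μ.map (fun ω (i : Fin N) => X (σ i) ω) = μ.map (fun ω (i : Fin N) => X i ω))
    -- each `I_j` is uniform on `{1,…,N}`
    (hIunif : ∀ j, μ.map (I j) = (N : ℝ≥0∞)⁻¹ • (Measure.count : Measure (Fin N)))
    -- the `I_j` are mutually independent
    (hIindep : iIndepFun I μ)
    -- the sequence `(I_j)` is independent of the tuple `(X₁,…,X_N)`
    (hIX : IndepFun (fun ω (j : ℕ) => I j ω) (fun ω (i : Fin N) => X i ω) μ)
    -- `(Z₁, Z₂, …)` is infinitely exchangeable (invariant under finite permutations)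
    (hZexch : ∀ σ : Equiv.Perm ℕ, (∃ n, ∀ m, n ≤ m → σ m = m) →
      ν.map (fun ω (j : ℕ) => Z (σ j) ω) = ν.map (fun ω (j : ℕ) => Z j ω))
    -- `ℒ(Z₁,…,Z_k) = ℒ(X_{I₁},…,X_{I_k})` for all `k`
    (hZX : ∀ k : ℕ, ν.map (fun ω (j : Fin k) => Z (↑j) ω)
      = μ.map (fun ω (j : Fin k) => X (I (↑j) ω) ω)) :
    ∀ (m : ℕ) (hm : m ≤ N), 1 ≤ m →
      ∀ A : Set (Fin m → 𝕏), MeasurableSet A →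
        |((μ.map (fun ω (j : Fin m) => X (Fin.castLE hm j) ω)) A).toReal -
            ((ν.map (fun ω (j : Fin m) => Z (↑j) ω)) A).toReal|
          ≤ (m : ℝ) * ((m : ℝ) - 1) / (2 * N) := by
  intro m hm hm1 A hA
  classical
  have hN0 : (N : ℝ≥0∞) ≠ 0 := Nat.cast_ne_zero.2 hN.ne'
  have hNtop : (N : ℝ≥0∞) ≠ ⊤ := ENNReal.natCast_ne_top N
  have hNinvtop : (N : ℝ≥0∞)⁻¹ ≠ ⊤ := ENNReal.inv_ne_top.2 hN0
  have hNR : (N : ℝ) ≠ 0 := Nat.cast_ne_zero.2 hN.ne'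
  -- the tuple maps
  set XT : Ω → (Fin N → 𝕏) := fun ω i => X i ω with hXT
  have mXT : Measurable XT := measurable_pi_lambda _ hXm
  set Λ : Measure (Fin N → 𝕏) := μ.map XT with hΛ
  have hΛprob : IsProbabilityMeasure Λ := Measure.isProbabilityMeasure_map mXT.aemeasurable
  set comp : (Fin m → Fin N) → (Fin N → 𝕏) → (Fin m → 𝕏) := fun f x k => x (f k) with hcomp
  have mcomp : ∀ f, Measurable (comp f) :=
    fun f => measurable_pi_lambda _ fun k => measurable_pi_apply (f k)
  set Itup : Ω → (Fin m → Fin N) := fun ω k => I (↑k) ω with hItup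
  have mItup : Measurable Itup := measurable_pi_lambda _ fun k => hIm _
  -- Claim A
  have claimA : μ.map (fun ω (j : Fin m) => X (Fin.castLE hm j) ω)
      = Λ.map (comp (Fin.castLE hm)) := by
    rw [hΛ, Measure.map_map (mcomp _) mXT]
    rfl
  -- Claim B : exchangeability
  have claimB : ∀ f : Fin m → Fin N, Function.Injective f →
      Λ.map (comp f) = Λ.map (comp (Fin.castLE hm)) := by
    intro f hf
    obtain ⟨σ, hσ⟩ := exists_perm_extend hm f hf
    have mφ : Measurable (fun x (i : Fin N) => x (σ i) : (Fin N → 𝕏) → (Fin N → 𝕏)) :=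
      measurable_pi_lambda _ fun i => measurable_pi_apply (σ i)
    have hperm : Λ.map (fun x (i : Fin N) => x (σ i)) = Λ := by
      rw [hΛ, Measure.map_map mφ mXT]
      exact hXexch σ
    have hcompeq : comp f
        = (comp (Fin.castLE hm)) ∘ (fun x (i : Fin N) => x (σ i)) := by
      funext x
      funext k
      simp [hcomp, Function.comp, hσ k]
    rw [hcompeq, ← Measure.map_map (mcomp _) mφ, hperm]
  -- uniform marginals
  have hIone : ∀ (j : ℕ) (v : Fin N), μ (I j ⁻¹' {v}) = (N : ℝ≥0∞)⁻¹ := by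
    intro j v
    rw [← Measure.map_apply (hIm j) (measurableSet_singleton v), hIunif j]
    simp [Measure.count_singleton]
  -- the law of Itup is uniform
  have ρeq : μ.map Itup
      = ((N : ℝ≥0∞)⁻¹ ^ m) • (Measure.count : Measure (Fin m → Fin N)) := by
    refine Measure.ext_of_singleton (fun f => ?_)
    rw [Measure.map_apply mItup (measurableSet_singleton f)]
    have hset : Itup ⁻¹' {f}
        = ⋂ i ∈ Finset.range m, I i ⁻¹' (if h : i < m then {f ⟨i, h⟩} else Set.univ) := by
      ext ω
      simp only [Set.mem_preimage, Set.mem_singleton_iff, Set.mem_iInter, Finset.mem_range]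
      constructor
      · intro h i hi
        rw [dif_pos hi]
        exact congrFun h ⟨i, hi⟩
      · intro h
        funext k
        have := h (↑k) k.isLt
        rw [dif_pos k.isLt] at this
        exact this
    rw [hset, hIindep.measure_inter_preimage_eq_mul (Finset.range m)
      (fun i _ => by
        split
        · exact measurableSet_singleton _
        · exact MeasurableSet.univ)]
    rw [Finset.prod_congr rfl (fun i hi => by
      rw [dif_pos (Finset.mem_range.1 hi)]
      exact hIone i _)]
    simp [Finset.prod_const, Measure.count_singleton]
  -- independence of Itup and XT
  have hIndep2 : IndepFun Itup XT μ := by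
    have h := hIX.comp (φ := fun (g : ℕ → Fin N) (k : Fin m) => g (↑k)) (ψ := id)
      (measurable_pi_lambda _ fun k => measurable_pi_apply _) measurable_id
    exact h
  have hpair : μ.map (fun ω => (Itup ω, XT ω)) = (μ.map Itup).prod Λ :=
    (indepFun_iff_map_prod_eq_prod_map_map mItup.aemeasurable mXT.aemeasurable).1 hIndep2
  -- the evaluation map
  set g : (Fin m → Fin N) × (Fin N → 𝕏) → (Fin m → 𝕏) := fun p k => p.2 (p.1 k) with hgdef
  have mg : Measurable g := by
    refine measurable_pi_lambda _ fun k => ?_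
    have h1 : Measurable (fun q : (Fin N → 𝕏) × Fin N => q.1 q.2) :=
      measurable_from_prod_countable_left fun i => measurable_pi_apply i
    exact h1.comp ((measurable_snd).prodMk ((measurable_pi_apply k).comp measurable_fst))
  have claimC : μ.map (fun ω (j : Fin m) => X (I (↑j) ω) ω) = ((μ.map Itup).prod Λ).map g := by
    rw [← hpair, Measure.map_map mg (mItup.prodMk mXT)]
    rfl
  have hval : (((μ.map Itup).prod Λ).map g) A
      = (N : ℝ≥0∞)⁻¹ ^ m * ∑ f : Fin m → Fin N, Λ (comp f ⁻¹' A) := by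
    rw [Measure.map_apply mg hA, ρeq, Measure.prod_apply (mg hA), lintegral_smul_measure,
      lintegral_count, tsum_fintype]
    rfl
  -- the two sides
  have hμside : (μ.map (fun ω (j : Fin m) => X (Fin.castLE hm j) ω)) A
      = Λ (comp (Fin.castLE hm) ⁻¹' A) := by
    rw [claimA, Measure.map_apply (mcomp _) hA]
  have hνside : (ν.map (fun ω (j : Fin m) => Z (↑j) ω)) A
      = (N : ℝ≥0∞)⁻¹ ^ m * ∑ f : Fin m → Fin N, Λ (comp f ⁻¹' A) := by
    rw [hZX m, claimC, hval]
  -- real-valued quantities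
  set p : (Fin m → Fin N) → ℝ≥0∞ := fun f => Λ (comp f ⁻¹' A) with hp
  have hptop : ∀ f, p f ≠ ⊤ := fun f => measure_ne_top Λ _
  set a : ℝ := (p (Fin.castLE hm)).toReal with ha
  set b : (Fin m → Fin N) → ℝ := fun f => (p f).toReal with hb
  have hbound : ∀ f, 0 ≤ b f ∧ b f ≤ 1 := by
    intro f
    refine ⟨ENNReal.toReal_nonneg, ?_⟩
    have h1 : p f ≤ 1 := prob_le_one
    calc (p f).toReal ≤ (1 : ℝ≥0∞).toReal := ENNReal.toReal_mono ENNReal.one_ne_top h1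
    _ = 1 := by simp
  have ha0 : 0 ≤ a := ENNReal.toReal_nonneg
  have ha1 : a ≤ 1 := (hbound (Fin.castLE hm)).2
  have hbinj : ∀ f, Function.Injective f → b f = a := by
    intro f hf
    have hpe : p f = p (Fin.castLE hm) := by
      show Λ (comp f ⁻¹' A) = Λ (comp (Fin.castLE hm) ⁻¹' A)
      rw [← Measure.map_apply (mcomp f) hA, ← Measure.map_apply (mcomp _) hA, claimB f hf]
    show (p f).toReal = (p (Fin.castLE hm)).toReal
    rw [hpe]
  set c : ℝ := ((N : ℝ)⁻¹) ^ m with hcdef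
  have hcE : ((N : ℝ≥0∞)⁻¹ ^ m).toReal = c := by
    rw [ENNReal.toReal_pow, ENNReal.toReal_inv, ENNReal.toReal_natCast]
  have hcpos : 0 ≤ c := by positivity
  have hone : c * (N : ℝ) ^ m = 1 := by
    rw [hcdef, ← mul_pow, inv_mul_cancel₀ hNR, one_pow]
  -- rewrite the goal
  have goalEq1 : ((μ.map (fun ω (j : Fin m) => X (Fin.castLE hm j) ω)) A).toReal = a := by
    rw [hμside]
  have goalEq2 : ((ν.map (fun ω (j : Fin m) => Z (↑j) ω)) A).toReal
      = c * ∑ f : Fin m → Fin N, b f := by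
    rw [hνside, ENNReal.toReal_mul, ENNReal.toReal_sum (fun f _ => measure_ne_top Λ _), hcE]
  rw [goalEq1, goalEq2]
  -- sum manipulation
  have hcard : ((Fintype.card (Fin m → Fin N)) : ℝ) = (N : ℝ) ^ m := by
    rw [Fintype.card_fun, Fintype.card_fin, Fintype.card_fin]
    push_cast
    ring
  have hsum : ∑ f : Fin m → Fin N, c * (a - b f) = a - c * ∑ f : Fin m → Fin N, b f := by
    rw [← Finset.mul_sum, Finset.sum_sub_distrib, Finset.sum_const, Finset.card_univ,
      nsmul_eq_mul, hcard, mul_sub]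
    congr 1
    rw [← mul_assoc, hone, one_mul]
  set Sbad : Finset (Fin m → Fin N) := Finset.univ.filter (fun f => ¬ Function.Injective f)
    with hSbad
  have hrestrict : ∑ f ∈ Sbad, c * (a - b f) = ∑ f : Fin m → Fin N, c * (a - b f) := by
    apply Finset.sum_subset (Finset.subset_univ _)
    intro f _ hf
    have hfi : Function.Injective f := by
      by_contra h
      exact hf (Finset.mem_filter.2 ⟨Finset.mem_univ f, h⟩)
    rw [hbinj f hfi, sub_self, mul_zero]
  have habs : |a - c * ∑ f : Fin m → Fin N, b f| ≤ c * Sbad.card := by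
    rw [← hsum, ← hrestrict]
    calc |∑ f ∈ Sbad, c * (a - b f)| ≤ ∑ f ∈ Sbad, |c * (a - b f)| :=
          Finset.abs_sum_le_sum_abs _ _
    _ ≤ ∑ _f ∈ Sbad, c := by
        apply Finset.sum_le_sum
        intro f _
        rw [abs_mul, abs_of_nonneg hcpos]
        nth_rewrite 2 [← mul_one c]
        apply mul_le_mul_of_nonneg_left _ hcpos
        rw [abs_sub_le_iff]
        exact ⟨by linarith [(hbound f).1], by linarith [(hbound f).2]⟩
    _ = c * Sbad.card := by rw [Finset.sum_const, nsmul_eq_mul, mul_comm]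
  -- identify c * card with a probability
  have hkey : ((N : ℝ≥0∞)⁻¹ ^ m) * (Sbad.card : ℝ≥0∞) = μ (Itup ⁻¹' ↑Sbad) := by
    rw [← Measure.map_apply mItup ((Set.to_countable _).measurableSet), ρeq,
      Measure.smul_apply, smul_eq_mul, Measure.count_apply_finset]
  have hlink : c * (Sbad.card : ℝ) = (μ (Itup ⁻¹' ↑Sbad)).toReal := by
    rw [← hkey, ENNReal.toReal_mul, hcE, ENNReal.toReal_natCast]
  -- union bound
  have hpairmeas : ∀ i j : Fin m, i < j → μ {ω | I ↑i ω = I ↑j ω} = (N : ℝ≥0∞)⁻¹ := by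
    intro i j hij
    have hne : (↑i : ℕ) ≠ (↑j : ℕ) := Nat.ne_of_lt hij
    have hind := hIindep.indepFun hne
    have hdecomp : {ω | I ↑i ω = I ↑j ω}
        = ⋃ v ∈ (Finset.univ : Finset (Fin N)), (I ↑i ⁻¹' {v} ∩ I ↑j ⁻¹' {v}) := by
      ext ω
      simp only [Set.mem_setOf_eq, Finset.mem_univ, Set.iUnion_true, Set.mem_iUnion,
        Set.mem_inter_iff, Set.mem_preimage, Set.mem_singleton_iff]
      exact ⟨fun h => ⟨I ↑j ω, h, rfl⟩, fun ⟨v, h1, h2⟩ => h1.trans h2.symm⟩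
    rw [hdecomp, measure_biUnion_finset ?_ ?_]
    · rw [Finset.sum_congr rfl (fun v _ => by
        rw [hind.measure_inter_preimage_eq_mul _ _ (measurableSet_singleton v)
          (measurableSet_singleton v), hIone, hIone]),
        Finset.sum_const, Finset.card_univ, Fintype.card_fin, nsmul_eq_mul, ← mul_assoc,
        ENNReal.mul_inv_cancel hN0 hNtop, one_mul]
    · intro v _ w _ hvw
      refine Set.disjoint_left.2 fun ω h1 h2 => hvw ?_
      have e1 : I ↑i ω = v := h1.1
      have e2 : I ↑i ω = w := h2.1
      rw [← e1, e2]
    · exact fun v _ => ((hIm ↑i) (measurableSet_singleton v)).inter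
        ((hIm ↑j) (measurableSet_singleton v))
  have hsubT : Itup ⁻¹' ↑Sbad
      ⊆ ⋃ j : Fin m, ⋃ i ∈ Finset.Iio j, {ω | I ↑i ω = I ↑j ω} := by
    intro ω hω
    have hnotinj : ¬ Function.Injective (Itup ω) := by
      have := hω
      simp only [Set.mem_preimage, Finset.coe_filter, Set.mem_setOf_eq, hSbad,
        Finset.mem_coe, Finset.mem_filter, Finset.mem_univ, true_and] at this
      exact this
    rw [Function.not_injective_iff] at hnotinj
    obtain ⟨i, j, hij, hne⟩ := hnotinj
    rcases lt_or_gt_of_ne hne with h | h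
    · exact Set.mem_iUnion.2 ⟨j, Set.mem_iUnion₂.2 ⟨i, Finset.mem_Iio.2 h, hij⟩⟩
    · exact Set.mem_iUnion.2 ⟨i, Set.mem_iUnion₂.2 ⟨j, Finset.mem_Iio.2 h, hij.symm⟩⟩
  have hTbound : μ (Itup ⁻¹' ↑Sbad)
      ≤ ∑ j : Fin m, ((↑(j : ℕ) : ℝ≥0∞) * (N : ℝ≥0∞)⁻¹) := by
    refine le_trans (measure_mono hsubT) (le_trans (measure_iUnion_le _) ?_)
    rw [tsum_fintype]
    apply Finset.sum_le_sum
    intro j _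
    refine le_trans (measure_biUnion_finset_le _ _) ?_
    rw [Finset.sum_congr rfl (fun i hi => hpairmeas i j (Finset.mem_Iio.1 hi)),
      Finset.sum_const, Fin.card_Iio, nsmul_eq_mul]
  have hBtop : (∑ j : Fin m, ((↑(j : ℕ) : ℝ≥0∞) * (N : ℝ≥0∞)⁻¹)) ≠ ⊤ := by
    refine (ENNReal.sum_lt_top.2 fun j _ => ?_).ne
    exact ENNReal.mul_lt_top (ENNReal.natCast_lt_top _) (hNinvtop.lt_top)
  have hgauss : (∑ j : Fin m, ((j : ℕ) : ℝ)) = (m : ℝ) * ((m : ℝ) - 1) / 2 := by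
    rw [Fin.sum_univ_eq_sum_range (fun i => (i : ℝ)) m]
    have h2 := congrArg (Nat.cast : ℕ → ℝ) (Finset.sum_range_id_mul_two m)
    push_cast [Nat.cast_sub hm1] at h2
    linarith
  have hBval : (∑ j : Fin m, ((↑(j : ℕ) : ℝ≥0∞) * (N : ℝ≥0∞)⁻¹)).toReal
      = (m : ℝ) * ((m : ℝ) - 1) / (2 * N) := by
    rw [ENNReal.toReal_sum (fun j _ => (ENNReal.mul_lt_top (ENNReal.natCast_lt_top _)
      (hNinvtop.lt_top)).ne)]
    have : ∀ j : Fin m, ((↑(j : ℕ) : ℝ≥0∞) * (N : ℝ≥0∞)⁻¹).toReal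
        = ((j : ℕ) : ℝ) * ((N : ℝ))⁻¹ := by
      intro j
      rw [ENNReal.toReal_mul, ENNReal.toReal_inv, ENNReal.toReal_natCast,
        ENNReal.toReal_natCast]
    rw [Finset.sum_congr rfl (fun j _ => this j), ← Finset.sum_mul, hgauss]
    field_simp
  calc |a - c * ∑ f : Fin m → Fin N, b f| ≤ c * Sbad.card := habs
  _ = (μ (Itup ⁻¹' ↑Sbad)).toReal := hlink
  _ ≤ (∑ j : Fin m, ((↑(j : ℕ) : ℝ≥0∞) * (N : ℝ≥0∞)⁻¹)).toReal :=
      ENNReal.toReal_mono hBtop hTbound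
  _ = (m : ℝ) * ((m : ℝ) - 1) / (2 * N) := hBval
end

section
/- Let $(g_n)$ and $g$ be measurable functions on a metric space $S$ with $|g_n| \le M$ for all $n$, such that $g_n(s_n) \to g(s)$ whenever $s_n \to s$ (continuous convergence). Let $(\nu_n)$ be Borel probability measures on $S$ converging weakly to $\nu$. Then $\int g_n \, d\nu_n \to \int g \, d\nu$. -/
open MeasureTheory Filter Topology

section aux

variable {S : Type*} [MetricSpace S] {g : ℕ → S → ℝ} {glim : S → ℝ}

private lemma exists_strictMono_aux (P : ℕ → ℕ → Prop) (h : ∀ j k, ∃ n, k ≤ n ∧ P j n) :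
    ∃ φ : ℕ → ℕ, StrictMono φ ∧ ∀ j, P j (φ j) := by
  choose f hf1 hf2 using h
  let φ : ℕ → ℕ := fun j => Nat.rec (f 0 0) (fun j ih => f (j + 1) (ih + 1)) j
  have hsucc : ∀ n, φ (n + 1) = f (n + 1) (φ n + 1) := fun n => rfl
  refine ⟨φ, strictMono_nat_of_lt_succ fun n => ?_, fun j => ?_⟩
  · have := hf1 (n + 1) (φ n + 1)
    rw [hsucc]
    omega
  · cases j with
    | zero => exact hf2 0 0
    | succ j => rw [hsucc]; exact hf2 (j + 1) (φ j + 1)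

private lemma tendsto_subseq_of_cc
    (hcc : ∀ (s : S) (sn : ℕ → S), Tendsto sn atTop (𝓝 s) →
      Tendsto (fun n => g n (sn n)) atTop (𝓝 (glim s)))
    {s : S} {φ : ℕ → ℕ} (hφ : StrictMono φ) {t : ℕ → S} (ht : Tendsto t atTop (𝓝 s)) :
    Tendsto (fun k => g (φ k) (t k)) atTop (𝓝 (glim s)) := by
  classical
  set sn : ℕ → S := fun m => if h : ∃ k, φ k = m then t h.choose else s with hsn
  have hsnφ : ∀ k, sn (φ k) = t k := by
    intro k
    have h : ∃ k', φ k' = φ k := ⟨k, rfl⟩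
    simp only [sn, dif_pos h]
    congr 1
    exact hφ.injective h.choose_spec
  have hsnlim : Tendsto sn atTop (𝓝 s) := by
    rw [Metric.tendsto_atTop]
    intro ε hε
    obtain ⟨K, hK⟩ := Metric.tendsto_atTop.mp ht ε hε
    refine ⟨φ K, fun m hm => ?_⟩
    by_cases h : ∃ k, φ k = m
    · have h1 : φ h.choose = m := h.choose_spec
      have h2 : K ≤ h.choose := by
        rw [← hφ.le_iff_le]
        omega
      simpa [sn, dif_pos h] using hK _ h2
    · simpa [sn, dif_neg h] using hε
  have := (hcc s sn hsnlim).comp hφ.tendsto_atTop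
  refine this.congr fun k => ?_
  simp [Function.comp, hsnφ k]

private lemma glim_continuous_of_cc
    (hcc : ∀ (s : S) (sn : ℕ → S), Tendsto sn atTop (𝓝 s) →
      Tendsto (fun n => g n (sn n)) atTop (𝓝 (glim s))) :
    Continuous glim := by
  apply SeqContinuous.continuous
  intro x p hx
  have hP : ∀ j k, ∃ n, k ≤ n ∧ |g n (x j) - glim (x j)| < 1 / (j + 1 : ℝ) := by
    intro j k
    have hpt : Tendsto (fun n => g n (x j)) atTop (𝓝 (glim (x j))) :=
      hcc (x j) (fun _ => x j) tendsto_const_nhds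
    have hpos : (0 : ℝ) < 1 / (j + 1 : ℝ) := by positivity
    obtain ⟨N, hN⟩ := Metric.tendsto_atTop.mp hpt _ hpos
    exact ⟨max N k, le_max_right _ _, by
      simpa [Real.dist_eq] using hN (max N k) (le_max_left _ _)⟩
  obtain ⟨φ, hφ, hφP⟩ := exists_strictMono_aux _ hP
  have h1 : Tendsto (fun j => g (φ j) (x j)) atTop (𝓝 (glim p)) :=
    tendsto_subseq_of_cc hcc hφ hx
  have h2 : Tendsto (fun j => g (φ j) (x j) - glim (x j)) atTop (𝓝 0) := by
    apply squeeze_zero_norm (fun j => (hφP j).le)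
    exact tendsto_one_div_add_atTop_nhds_zero_nat
  have := h1.sub h2
  simpa [Function.comp_def] using this

end aux

/-- Generalized (Serfozo/Langen) dominated convergence for varying measures: if the
uniformly bounded measurable functions `gₙ` converge continuously to `g` and the
probability measures `νₙ` converge weakly to `ν`, then `∫ gₙ dνₙ → ∫ g dν`. -/
theorem generalized_dominated_convergence {S : Type*} [MetricSpace S] [MeasurableSpace S]
    [BorelSpace S]
    (g : ℕ → S → ℝ) (glim : S → ℝ) (hgm : ∀ n, Measurable (g n)) (hglim : Measurable glim)
    (M : ℝ) (hbd : ∀ n s, |g n s| ≤ M)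
    (hcc : ∀ (s : S) (sn : ℕ → S), Filter.Tendsto sn Filter.atTop (nhds s) →
      Filter.Tendsto (fun n => g n (sn n)) Filter.atTop (nhds (glim s)))
    (ν : ℕ → ProbabilityMeasure S) (νlim : ProbabilityMeasure S)
    (hν : Filter.Tendsto ν Filter.atTop (nhds νlim)) :
    Filter.Tendsto (fun n => ∫ s, g n s ∂(ν n : Measure S)) Filter.atTop
      (nhds (∫ s, glim s ∂(νlim : Measure S))) := by
  classical
  have hSne : Nonempty S := νlim.nonempty
  have hM0 : 0 ≤ M := le_trans (abs_nonneg _) (hbd 0 (Classical.arbitrary S))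
  have hglim_cont : Continuous glim := glim_continuous_of_cc hcc
  have hglim_bd : ∀ s, |glim s| ≤ M := by
    intro s
    have hpt : Tendsto (fun n => g n s) atTop (𝓝 (glim s)) :=
      hcc s (fun _ => s) tendsto_const_nhds
    exact le_of_tendsto hpt.abs (Filter.Eventually.of_forall fun n => hbd n s)
  -- integrabilities
  have hint_g : ∀ n (μ : Measure S) [IsProbabilityMeasure μ], Integrable (g n) μ := by
    intro n μ _
    exact ⟨(hgm n).aestronglyMeasurable,
      HasFiniteIntegral.of_bounded (C := M) (ae_of_all μ fun s => by
        simpa [Real.norm_eq_abs] using hbd n s)⟩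
  have hint_glim : ∀ (μ : Measure S) [IsProbabilityMeasure μ], Integrable glim μ := by
    intro μ _
    exact ⟨hglim.aestronglyMeasurable,
      HasFiniteIntegral.of_bounded (C := M) (ae_of_all μ fun s => by
        simpa [Real.norm_eq_abs] using hglim_bd s)⟩
  -- convergence of ∫ glim dνₙ
  let G : BoundedContinuousFunction S ℝ :=
    BoundedContinuousFunction.ofNormedAddCommGroup glim hglim_cont M
      (fun s => by simpa [Real.norm_eq_abs] using hglim_bd s)
  have hG : Tendsto (fun n => ∫ s, glim s ∂(ν n : Measure S)) atTop
      (𝓝 (∫ s, glim s ∂(νlim : Measure S))) := by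
    have := ProbabilityMeasure.tendsto_iff_forall_integral_tendsto.mp hν G
    simpa [G] using this
  -- key: ∫ (g n - glim) dνₙ → 0
  have key : Tendsto (fun n => ∫ s, (g n s - glim s) ∂(ν n : Measure S)) atTop (𝓝 0) := by
    rw [NormedAddCommGroup.tendsto_nhds_zero]
    intro ε hε
    set δ : ℝ := ε / (4 * (M + 1)) with hδ
    have hδpos : 0 < δ := by positivity
    -- the bad sets
    set E : ℕ → Set S := fun k => {s | ∃ n, k ≤ n ∧ ε / 2 < |g n s - glim s|} with hE
    set F : ℕ → Set S := fun k => closure (E k) with hF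
    have hFclosed : ∀ k, IsClosed (F k) := fun k => isClosed_closure
    have hFanti : Antitone F := by
      intro k k' hkk'
      apply closure_mono
      rintro s ⟨n, hn, hns⟩
      exact ⟨n, le_trans hkk' hn, hns⟩
    have hFempty : (⋂ k, F k) = ∅ := by
      by_contra h
      obtain ⟨s, hs⟩ := Set.nonempty_iff_ne_empty.mpr h
      simp only [Set.mem_iInter] at hs
      have hP : ∀ (j k : ℕ), ∃ n, k ≤ n ∧
          ∃ y : S, dist y s < 1 / ((j : ℝ) + 1) ∧ ε / 2 < |g n y - glim y| := by
        intro j k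
        have hsk := hs k
        rw [hF, Metric.mem_closure_iff] at hsk
        obtain ⟨y, hyE, hyd⟩ := hsk (1 / (j + 1 : ℝ)) (by positivity)
        obtain ⟨n, hn, hny⟩ := hyE
        exact ⟨n, hn, y, by simpa [dist_comm] using hyd, hny⟩
      obtain ⟨φ, hφ, hφP⟩ := exists_strictMono_aux _ hP
      choose y hy1 hy2 using hφP
      have hyt : Tendsto y atTop (𝓝 s) := by
        rw [tendsto_iff_dist_tendsto_zero]
        apply squeeze_zero (fun j => dist_nonneg) (fun j => (hy1 j).le)
        exact tendsto_one_div_add_atTop_nhds_zero_nat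
      have h1 : Tendsto (fun j => g (φ j) (y j)) atTop (𝓝 (glim s)) :=
        tendsto_subseq_of_cc hcc hφ hyt
      have h2 : Tendsto (fun j => glim (y j)) atTop (𝓝 (glim s)) :=
        (hglim_cont.tendsto s).comp hyt
      have h3 : Tendsto (fun j => |g (φ j) (y j) - glim (y j)|) atTop (𝓝 0) := by
        have := (h1.sub h2).abs
        simpa using this
      have h4 : ∀ᶠ j in atTop, |g (φ j) (y j) - glim (y j)| < ε / 2 :=
        h3.eventually (gt_mem_nhds (by linarith))
      obtain ⟨j, hj⟩ := h4.exists
      exact absurd (hy2 j) (not_lt.mpr hj.le)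
    -- measure of F k under νlim tends to 0
    have hFmeas : Tendsto (fun k => (νlim : Measure S) (F k)) atTop (𝓝 0) := by
      have := tendsto_measure_iInter_atTop (μ := (νlim : Measure S))
        (fun k => ((hFclosed k).measurableSet).nullMeasurableSet) hFanti
        ⟨0, measure_ne_top _ _⟩
      rw [hFempty] at this
      simpa [Function.comp_def] using this
    have hδ2pos : (0 : ENNReal) < ENNReal.ofReal δ := by
      simp [ENNReal.ofReal_pos, hδpos]
    obtain ⟨k0, hk0⟩ := (hFmeas.eventually (gt_mem_nhds hδ2pos)).exists
    -- portmanteau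
    have hport : ∀ᶠ n in atTop, (ν n : Measure S) (F k0) < ENNReal.ofReal δ := by
      refine Filter.eventually_lt_of_limsup_lt (lt_of_le_of_lt
        (ProbabilityMeasure.limsup_measure_closed_le_of_tendsto hν (hFclosed k0)) hk0)
        (Filter.isBoundedUnder_of ⟨⊤, fun _ => le_top⟩)
    filter_upwards [hport, Filter.eventually_ge_atTop k0] with n hn hnk0
    -- pointwise bound
    have hpw : ∀ s, |g n s - glim s| ≤ ε / 2 + (F k0).indicator (fun _ => 2 * M) s := by
      intro s
      by_cases hsF : s ∈ F k0
      · rw [Set.indicator_of_mem hsF]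
        have := abs_sub (g n s) (glim s)
        have h1 := hbd n s
        have h2 := hglim_bd s
        have := abs_sub_abs_le_abs_sub (g n s) (glim s)
        calc |g n s - glim s| ≤ |g n s| + |glim s| := abs_sub _ _
          _ ≤ ε / 2 + 2 * M := by linarith
      · rw [Set.indicator_of_notMem hsF]
        have hsE : s ∉ E k0 := fun h => hsF (subset_closure h)
        simp only [hE, Set.mem_setOf_eq, not_exists, not_and, not_lt] at hsE
        simpa using hsE n hnk0
    -- integral bound
    have hintLHS : Integrable (fun s => g n s - glim s) (ν n : Measure S) :=
      (hint_g n _).sub (hint_glim _)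
    have hintRHS : Integrable
        (fun s => ε / 2 + (F k0).indicator (fun _ => 2 * M) s) (ν n : Measure S) :=
      (integrable_const _).add
        ((integrable_const (2 * M)).indicator (hFclosed k0).measurableSet)
    have hbound : ‖∫ s, (g n s - glim s) ∂(ν n : Measure S)‖ ≤
        ε / 2 + 2 * M * ((ν n : Measure S) (F k0)).toReal := by
      calc ‖∫ s, (g n s - glim s) ∂(ν n : Measure S)‖
          ≤ ∫ s, ‖g n s - glim s‖ ∂(ν n : Measure S) := norm_integral_le_integral_norm _
        _ ≤ ∫ s, (ε / 2 + (F k0).indicator (fun _ => 2 * M) s) ∂(ν n : Measure S) := by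
            apply integral_mono hintLHS.norm hintRHS
            intro s
            simpa [Real.norm_eq_abs] using hpw s
        _ = ε / 2 + 2 * M * ((ν n : Measure S) (F k0)).toReal := by
            rw [integral_add (integrable_const _)
              ((integrable_const (2 * M)).indicator (hFclosed k0).measurableSet)]
            rw [integral_indicator_const _ (hFclosed k0).measurableSet]
            simp [mul_comm, smul_eq_mul]
            exact Or.inl rfl
    have htoReal : ((ν n : Measure S) (F k0)).toReal < δ := by
      rw [← ENNReal.lt_ofReal_iff_toReal_lt (measure_ne_top _ _)]
      exact hn
    have hfin : 2 * M * ((ν n : Measure S) (F k0)).toReal < ε / 2 := by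
      have h0 : 0 ≤ ((ν n : Measure S) (F k0)).toReal := ENNReal.toReal_nonneg
      have hδeq : (M + 1) * δ = ε / 4 := by
        rw [hδ]; field_simp
      nlinarith [mul_le_mul_of_nonneg_left htoReal.le hM0]
    calc ‖∫ s, (g n s - glim s) ∂(ν n : Measure S)‖
        ≤ ε / 2 + 2 * M * ((ν n : Measure S) (F k0)).toReal := hbound
      _ < ε := by linarith
  -- combine
  have hcomb := key.add hG
  rw [zero_add] at hcomb
  apply hcomb.congr
  intro n
  have h1 : Integrable (fun s => g n s - glim s) (ν n : Measure S) :=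
    (hint_g n _).sub (hint_glim _)
  rw [← integral_add h1 (hint_glim _)]
  simp
end
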